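/- Let m, n ≥ 2 and fix σ : Fin m → Equiv.Perm (Fin n). Consider the set S ⊆ (Fin m → ℝ) × (Fin n → ℝ) of parameter pairs (β, γ) such that: (i) β x > 0 for all x, ∑_x β x = 1, γ y ≥ 0 for all y, ∑_y γ y = 1; (ii) A(y) := ∑_x β x · γ(σ x y) > 0 for all y; (iii) there exist x, x', y with γ(σ x y) ≠ γ(σ x' y) (the rows of the forward channel are not all equal); and (iv) there exists a family ρ : Fin n → Equiv.Perm (Fin m) with a(0, x)/A(0) = a(y, ρ y x)/A(y) for all y, x, where a(y, x) = β x · γ(σ x y) (the reverse channel is a uniform channel). Then there exists a multivariate polynomial P ∈ MvPolynomial (Fin m ⊕ Fin n) ℝ with P ≠ 0 such that every (β, γ) ∈ S is a zero of P, i.e., evaluating P at the point assigning β x to the left coordinates and γ y to the right coordinates gives 0. -/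
import Mathlib

open Finset

noncomputable section UCM

variable {m n : ℕ}

/-- The polynomial `A(y) = ∑ x, β x * γ (σ x y)`. -/
def uA (σ : Fin m → Equiv.Perm (Fin n)) (y : Fin n) : MvPolynomial (Fin m ⊕ Fin n) ℝ :=
  ∑ x, MvPolynomial.X (Sum.inl x) * MvPolynomial.X (Sum.inr (σ x y))

/-- Cleared-denominator difference polynomial. -/
def uD (σ : Fin m → Equiv.Perm (Fin n)) (z : Fin n) (ρ : Fin n → Equiv.Perm (Fin m))
    (y : Fin n) (x : Fin m) : MvPolynomial (Fin m ⊕ Fin n) ℝ :=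
  MvPolynomial.X (Sum.inl x) * MvPolynomial.X (Sum.inr (σ x z)) * uA σ y
    - MvPolynomial.X (Sum.inl (ρ y x)) * MvPolynomial.X (Sum.inr (σ (ρ y x) y)) * uA σ z

/-- Sum of squares polynomial for a fixed family `ρ`. -/
def uQ (σ : Fin m → Equiv.Perm (Fin n)) (z : Fin n) (ρ : Fin n → Equiv.Perm (Fin m)) :
    MvPolynomial (Fin m ⊕ Fin n) ℝ :=
  ∑ y, ∑ x, (uD σ z ρ y x) ^ 2

lemma eval_uA (β : Fin m → ℝ) (γ : Fin n → ℝ) (σ : Fin m → Equiv.Perm (Fin n)) (y : Fin n) :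
    MvPolynomial.eval (Sum.elim β γ) (uA σ y) = ∑ x, β x * γ (σ x y) := by
  simp [uA]

lemma eval_uD (β : Fin m → ℝ) (γ : Fin n → ℝ) (σ : Fin m → Equiv.Perm (Fin n)) (z : Fin n)
    (ρ : Fin n → Equiv.Perm (Fin m)) (y : Fin n) (x : Fin m) :
    MvPolynomial.eval (Sum.elim β γ) (uD σ z ρ y x)
      = β x * γ (σ x z) * (∑ x', β x' * γ (σ x' y))
        - β (ρ y x) * γ (σ (ρ y x) y) * (∑ x', β x' * γ (σ x' z)) := by
  simp [uD, eval_uA]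

lemma eval_uQ (β : Fin m → ℝ) (γ : Fin n → ℝ) (σ : Fin m → Equiv.Perm (Fin n)) (z : Fin n)
    (ρ : Fin n → Equiv.Perm (Fin m)) :
    MvPolynomial.eval (Sum.elim β γ) (uQ σ z ρ)
      = ∑ y, ∑ x, (MvPolynomial.eval (Sum.elim β γ) (uD σ z ρ y x)) ^ 2 := by
  simp [uQ]

/-- Two permutations that differ somewhere differ at a point `≠ z`. -/
lemma perm_differ_ne (f g : Equiv.Perm (Fin n)) (z y0 : Fin n) (h : f y0 ≠ g y0) :
    ∃ y, y ≠ z ∧ f y ≠ g y := by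
  by_contra hc
  push_neg at hc
  have hz : f z = g z := by
    obtain ⟨y, hy⟩ := g.surjective (f z)
    rcases eq_or_ne y z with rfl | hyz
    · exact hy.symm
    · exfalso
      have : f z = f y := by rw [hc y hyz]; exact hy.symm
      exact hyz (f.injective this).symm
  rcases eq_or_ne y0 z with rfl | h0
  · exact h hz
  · exact h (hc y0 h0)

lemma uQ_ne_zero (hm : 2 ≤ m) (σ : Fin m → Equiv.Perm (Fin n)) (z : Fin n)
    (x0 x1 : Fin m) (y0 : Fin n) (hy0 : y0 ≠ z) (hσ : σ x0 y0 ≠ σ x1 y0)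
    (ρ : Fin n → Equiv.Perm (Fin m)) : uQ σ z ρ ≠ 0 := by
  classical
  intro hQ
  have hm2 : (2:ℝ) ≤ (m:ℝ) := by exact_mod_cast hm
  by_cases hid : ∀ y x, ρ y x = x
  · -- identity case: evaluate at β ≡ 1, γ = 1 + indicator of z0 = σ x0 y0
    set z0 : Fin n := σ x0 y0 with hz0
    set β : Fin m → ℝ := fun _ => 1 with hβ
    set γ : Fin n → ℝ := fun w => 1 + (if w = z0 then 1 else 0) with hγ
    have hev : MvPolynomial.eval (Sum.elim β γ) (uQ σ z ρ) = 0 := by rw [hQ]; simp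
    rw [eval_uQ] at hev
    have h1 := (Finset.sum_eq_zero_iff_of_nonneg (by intro y _; positivity)).mp hev
    have hterm := (Finset.sum_eq_zero_iff_of_nonneg (by intro x _; positivity)).mp
      (h1 y0 (mem_univ y0))
    have hD : ∀ x, MvPolynomial.eval (Sum.elim β γ) (uD σ z ρ y0 x) = 0 := by
      intro x
      exact pow_eq_zero_iff (by norm_num) |>.mp (hterm x (mem_univ x))
    set N : Fin n → ℝ := fun y => ∑ x', (if σ x' y = z0 then (1:ℝ) else 0) with hN
    have hA : ∀ y : Fin n, (∑ x', β x' * γ (σ x' y)) = m + N y := by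
      intro y
      simp only [hβ, hγ, hN, one_mul]
      rw [Finset.sum_add_distrib]
      simp [Finset.card_univ]
    have hNnonneg : ∀ y, 0 ≤ N y := by
      intro y; apply Finset.sum_nonneg; intro x _; positivity
    have hx0z : σ x0 z ≠ z0 := by
      intro h
      exact hy0 ((σ x0).injective (by rw [h, hz0])).symm
    have hx1y0 : σ x1 y0 ≠ z0 := Ne.symm hσ
    have g1 : γ (σ x0 z) = 1 := by simp [hγ, hx0z]
    have g2 : γ z0 = 2 := by simp [hγ]; norm_num
    have g3 : γ (σ x1 y0) = 1 := by simp [hγ, hx1y0]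
    set c : ℝ := γ (σ x1 z) with hc
    have hc1 : 1 ≤ c := by
      rw [hc, hγ]; dsimp only; split <;> norm_num
    have e1 := hD x0
    have e2 := hD x1
    rw [eval_uD] at e1 e2
    simp only [hid] at e1 e2
    rw [hA y0, hA z] at e1 e2
    rw [← hz0, g1, g2] at e1
    rw [← hc, g3] at e2
    simp only [hβ] at e1 e2
    -- e1 : 1 * 1 * (m + N y0) - 1 * 2 * (m + N z) = 0
    -- e2 : 1 * c * (m + N y0) - 1 * 1 * (m + N z) = 0
    have key : (2 * c - 1) * ((m:ℝ) + N z) = 0 := by linear_combination e2 - c * e1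
    nlinarith [hNnonneg z, key, hc1, hm2]
  · push_neg at hid
    obtain ⟨y1, x2, hne⟩ := hid
    set β : Fin m → ℝ := fun x => if x = x2 then 2 else 1 with hβ
    set γ : Fin n → ℝ := fun _ => 1 with hγ
    have hev : MvPolynomial.eval (Sum.elim β γ) (uQ σ z ρ) = 0 := by rw [hQ]; simp
    rw [eval_uQ] at hev
    have hterm := (Finset.sum_eq_zero_iff_of_nonneg (by intro y _; positivity)).mp hev
    have hterm2 := (Finset.sum_eq_zero_iff_of_nonneg (by intro x _; positivity)).mp
      (hterm y1 (mem_univ y1))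
    have hD : MvPolynomial.eval (Sum.elim β γ) (uD σ z ρ y1 x2) = 0 :=
      pow_eq_zero_iff (by norm_num) |>.mp (hterm2 x2 (mem_univ x2))
    rw [eval_uD] at hD
    have hS : ∀ y : Fin n, (∑ x', β x' * γ (σ x' y)) = m + 1 := by
      intro y
      have : ∀ x : Fin m, β x * γ (σ x y) = 1 + (if x = x2 then (1:ℝ) else 0) := by
        intro x
        simp only [hβ, hγ, mul_one]
        split <;> norm_num
      rw [Finset.sum_congr rfl (fun x _ => this x), Finset.sum_add_distrib]
      simp [Finset.card_univ]
    rw [hS y1] at hD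
    simp only [hβ, hγ, if_pos rfl, if_neg hne] at hD
    -- hD : 2 * 1 * (m+1) - 1 * 1 * (m+1) = 0
    nlinarith [hD, hm2]

end UCM

/-- Core of the identifiability theorem: there is a nonzero multivariate
polynomial `P` in the `m + n` variables `(β, γ)` such that every parameter
pair in the 'bad' set — `β` a fully-supported pmf, `γ` a pmf, the marginal of
`Y` fully supported, the forward-channel rows not all equal, and the reverse
channel a uniform channel — is a zero of `P`. -/
theorem ucm_bad_set_in_zero_locus
    (m n : ℕ) (hm : 2 ≤ m) (hn : 2 ≤ n) (σ : Fin m → Equiv.Perm (Fin n)) :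
    ∃ P : MvPolynomial (Fin m ⊕ Fin n) ℝ, P ≠ 0 ∧
      ∀ (β : Fin m → ℝ) (γ : Fin n → ℝ),
        (∀ x, 0 < β x) → (∑ x, β x = 1) →
        (∀ y, 0 ≤ γ y) → (∑ y, γ y = 1) →
        (∀ y : Fin n, 0 < ∑ x, β x * γ (σ x y)) →
        (∃ x x' y, γ (σ x y) ≠ γ (σ x' y)) →
        (∃ ρ : Fin n → Equiv.Perm (Fin m), ∀ (y : Fin n) (x : Fin m),
          β x * γ (σ x ⟨0, by omega⟩) / (∑ x', β x' * γ (σ x' ⟨0, by omega⟩))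
            = β (ρ y x) * γ (σ (ρ y x) y) / (∑ x', β x' * γ (σ x' y))) →
        MvPolynomial.eval (Sum.elim β γ) P = 0 := by
  classical
  set z : Fin n := ⟨0, by omega⟩ with hz
  by_cases hσc : ∀ x x' y, σ x y = σ x' y
  · refine ⟨MvPolynomial.X (Sum.inl ⟨0, by omega⟩), MvPolynomial.X_ne_zero _, ?_⟩
    intro β γ _ _ _ _ _ h3 _
    obtain ⟨x, x', y, hne⟩ := h3
    exact absurd (congrArg γ (hσc x x' y)) hne
  · push_neg at hσc
    obtain ⟨x0, x1, y', hy'⟩ := hσc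
    obtain ⟨y0, hy0z, hy0⟩ := perm_differ_ne (σ x0) (σ x1) z y' hy'
    refine ⟨∏ ρ : Fin n → Equiv.Perm (Fin m), uQ σ z ρ, ?_, ?_⟩
    · exact Finset.prod_ne_zero_iff.mpr fun ρ _ =>
        uQ_ne_zero hm σ z x0 x1 y0 hy0z hy0 ρ
    · intro β γ _ _ _ _ hA _ hρ
      obtain ⟨ρ, hρ⟩ := hρ
      rw [map_prod]
      apply Finset.prod_eq_zero (mem_univ ρ)
      rw [eval_uQ]
      apply Finset.sum_eq_zero
      intro y _
      apply Finset.sum_eq_zero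
      intro x _
      have h := hρ y x
      have hAz : (0:ℝ) < ∑ x', β x' * γ (σ x' z) := hA z
      have hAy : (0:ℝ) < ∑ x', β x' * γ (σ x' y) := hA y
      rw [div_eq_div_iff hAz.ne' hAy.ne'] at h
      rw [eval_uD, h, sub_self]
      exact zero_pow (by norm_num)
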